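/- Let p ≥ 1 be an integer and let w₁ ≥ 0, w₂ ≥ 0 and c > 0 be reals. For every x, μ₁, μ₂ ∈ ℝ^p, every π₁, π₂ ≥ 0 with π₁ + π₂ = 1, and all symmetric positive definite p×p real matrices Σ₁, Σ₂ with det Σ₁ ≤ det Σ₂ and all eigenvalues of Σ₂ at most c, one has log( π₁ N(x; μ₁, Σ₁) + π₂ N(x; μ₂, Σ₂) ) − w₁ KL(N(μ₁,Σ₁), N(μ₂,Σ₂)) − w₂ KL(N(μ₂,Σ₂), N(μ₁,Σ₁)) ≤ (1/2)( (1 + w₂) log det(Σ₁⁻¹) − w₂ tr(Σ₁⁻¹ Σ₂) ) + (p/2)( w₁ + w₂ + w₂ log c ). -/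

import Mathlib

open Matrix Real

/-- Multivariate Gaussian density
`N(x; μ, S) = (2π)^{-p/2} (det S)^{-1/2} exp(-(1/2)(x-μ)ᵀ S⁻¹ (x-μ))`. -/
noncomputable def gaussDensity {p : ℕ} (x μ : Fin p → ℝ) (S : Matrix (Fin p) (Fin p) ℝ) : ℝ :=
  (2 * Real.pi) ^ (-(p : ℝ) / 2) * S.det ^ (-(1 : ℝ) / 2) *
    Real.exp (-(1 / 2) * ((x - μ) ⬝ᵥ (S⁻¹ *ᵥ (x - μ))))

/-- Closed form of the KL divergence between the Gaussians `N(μ₁, S₁)` and `N(μ₂, S₂)`. -/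
noncomputable def gaussKL {p : ℕ} (μ₁ : Fin p → ℝ) (S₁ : Matrix (Fin p) (Fin p) ℝ)
    (μ₂ : Fin p → ℝ) (S₂ : Matrix (Fin p) (Fin p) ℝ) : ℝ :=
  (1 / 2) * (Real.log (S₂.det / S₁.det) - p + (S₂⁻¹ * S₁).trace +
    (μ₂ - μ₁) ⬝ᵥ (S₂⁻¹ *ᵥ (μ₂ - μ₁)))

/-! The mixture density is at most `(det Σ₁)^{-1/2}`, because each Gaussian density is at most
`(det Σ)^{-1/2}` and `det Σ₁ ≤ det Σ₂`. Both KL divergences are bounded below by dropping their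
nonnegative quadratic and trace terms (and, in `KL(N₁, N₂)`, the nonnegative `log (det Σ₂ / det Σ₁)`),
and the remaining `log det Σ₂` is at most `p log c` by the eigenvalue bound. -/

namespace Matrix

variable {n : Type*} [Fintype n]

open scoped ComplexOrder MatrixOrder in
theorem PosSemidef.trace_mul_nonneg {𝕜 : Type*} [RCLike 𝕜] {A B : Matrix n n 𝕜}
    (hA : A.PosSemidef) (hB : B.PosSemidef) : 0 ≤ (A * B).trace := by
  classical
  obtain ⟨C, rfl⟩ := CStarAlgebra.nonneg_iff_eq_star_mul_self.mp hA.nonneg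
  rw [star_eq_conjTranspose, mul_assoc, trace_mul_comm]
  exact (hB.mul_mul_conjTranspose_same C).trace_nonneg

theorem PosSemidef.dotProduct_mulVec_nonneg_real {A : Matrix n n ℝ} (hA : A.PosSemidef)
    (v : n → ℝ) : 0 ≤ v ⬝ᵥ (A *ᵥ v) := by
  simpa using hA.dotProduct_mulVec_nonneg v

theorem PosDef.det_le_pow_of_eigenvalues_le [DecidableEq n] {A : Matrix n n ℝ} (hA : A.PosDef)
    {c : ℝ} (hc : ∀ i, hA.1.eigenvalues i ≤ c) : A.det ≤ c ^ Fintype.card n := by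
  rw [hA.1.det_eq_prod_eigenvalues, ← Finset.card_univ, ← Finset.prod_const]
  exact Finset.prod_le_prod (fun i _ => (hA.eigenvalues_pos i).le) fun i _ => hc i

end Matrix

theorem Real.log_convex_combination_le {π₁ π₂ a b M : ℝ} (hπ₁ : 0 ≤ π₁) (hπ₂ : 0 ≤ π₂)
    (hπ : π₁ + π₂ = 1) (ha : 0 < a) (hb : 0 < b) (haM : a ≤ M) (hbM : b ≤ M) :
    log (π₁ * a + π₂ * b) ≤ log M := by
  have hmin : min a b ≤ π₁ * a + π₂ * b := by
    nlinarith [min_le_left a b, min_le_right a b]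
  refine log_le_log (lt_of_lt_of_le (lt_min ha hb) hmin) ?_
  nlinarith

section Gaussian

variable {p : ℕ} (x μ : Fin p → ℝ) {S : Matrix (Fin p) (Fin p) ℝ}

theorem gaussDensity_pos (hS : S.PosDef) : 0 < gaussDensity x μ S := by
  have := hS.det_pos
  unfold gaussDensity
  positivity

theorem gaussDensity_le_rpow_det (hS : S.PosDef) :
    gaussDensity x μ S ≤ S.det ^ (-(1 : ℝ) / 2) := by
  have hnorm : (2 * π) ^ (-(p : ℝ) / 2) ≤ 1 :=
    rpow_le_one_of_one_le_of_nonpos (by linarith [pi_gt_three])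
      (div_nonpos_of_nonpos_of_nonneg (neg_nonpos.mpr p.cast_nonneg) zero_le_two)
  have hexp : exp (-(1 / 2) * ((x - μ) ⬝ᵥ (S⁻¹ *ᵥ (x - μ)))) ≤ 1 := by
    rw [exp_le_one_iff]
    linarith [hS.inv.posSemidef.dotProduct_mulVec_nonneg_real (x - μ)]
  have := hS.det_pos
  calc gaussDensity x μ S ≤ 1 * S.det ^ (-(1 : ℝ) / 2) * 1 := by
        unfold gaussDensity
        gcongr
    _ = S.det ^ (-(1 : ℝ) / 2) := by ring

theorem le_gaussKL {S₁ S₂ : Matrix (Fin p) (Fin p) ℝ} (μ₁ μ₂ : Fin p → ℝ) (hS₂ : S₂.PosDef) :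
    (1 / 2) * (log (S₂.det / S₁.det) - p + (S₂⁻¹ * S₁).trace) ≤ gaussKL μ₁ S₁ μ₂ S₂ := by
  have := hS₂.inv.posSemidef.dotProduct_mulVec_nonneg_real (μ₂ - μ₁)
  unfold gaussKL
  linarith

end Gaussian

theorem multivariate_pointwise_penalized_bound_general (p : ℕ)
    (w₁ w₂ c : ℝ) (hw₁ : 0 ≤ w₁) (hw₂ : 0 ≤ w₂)
    (x μ₁ μ₂ : Fin p → ℝ) (π₁ π₂ : ℝ) (hπ₁ : 0 ≤ π₁) (hπ₂ : 0 ≤ π₂) (hπ : π₁ + π₂ = 1)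
    (S₁ S₂ : Matrix (Fin p) (Fin p) ℝ) (hS₁ : S₁.PosDef) (hS₂ : S₂.PosDef)
    (hdet : S₁.det ≤ S₂.det) (heig : ∀ i, hS₂.1.eigenvalues i ≤ c) :
    Real.log (π₁ * gaussDensity x μ₁ S₁ + π₂ * gaussDensity x μ₂ S₂)
      - w₁ * gaussKL μ₁ S₁ μ₂ S₂ - w₂ * gaussKL μ₂ S₂ μ₁ S₁ ≤
      (1 / 2) * ((1 + w₂) * Real.log (S₁⁻¹).det - w₂ * (S₁⁻¹ * S₂).trace)
        + ((p : ℝ) / 2) * (w₁ + w₂ + w₂ * Real.log c) := by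
  have hd₁ := hS₁.det_pos
  have hd₂ := hS₂.det_pos
  have hmix : log (π₁ * gaussDensity x μ₁ S₁ + π₂ * gaussDensity x μ₂ S₂)
      ≤ -(1 / 2) * log S₁.det := by
    calc _ ≤ log (S₁.det ^ (-(1 : ℝ) / 2)) :=
          log_convex_combination_le hπ₁ hπ₂ hπ (gaussDensity_pos x μ₁ hS₁)
            (gaussDensity_pos x μ₂ hS₂) (gaussDensity_le_rpow_det x μ₁ hS₁)
            ((gaussDensity_le_rpow_det x μ₂ hS₂).trans
              (rpow_le_rpow_of_nonpos hd₁ hdet (by norm_num)))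
      _ = -(1 / 2) * log S₁.det := by rw [log_rpow hd₁]; ring
  have hKL₁₂ : -(p : ℝ) / 2 ≤ gaussKL μ₁ S₁ μ₂ S₂ := by
    have := le_gaussKL (S₁ := S₁) μ₁ μ₂ hS₂
    have := hS₂.inv.posSemidef.trace_mul_nonneg hS₁.posSemidef
    have := log_nonneg ((one_le_div hd₁).mpr hdet)
    linarith
  have hKL₂₁ := le_gaussKL (S₁ := S₂) μ₂ μ₁ hS₁
  rw [log_div hd₁.ne' hd₂.ne'] at hKL₂₁
  have hlogc : log S₂.det ≤ p * log c := by
    simpa using log_le_log hd₂ (hS₂.det_le_pow_of_eigenvalues_le heig)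
  rw [det_nonsing_inv, Ring.inverse_eq_inv', log_inv]
  have := mul_le_mul_of_nonneg_left hKL₁₂ hw₁
  have := mul_le_mul_of_nonneg_left hKL₂₁ hw₂
  have := mul_le_mul_of_nonneg_left hlogc hw₂
  linarith

theorem multivariate_pointwise_penalized_bound (p : ℕ) (hp : 1 ≤ p)
    (w₁ w₂ c : ℝ) (hw₁ : 0 ≤ w₁) (hw₂ : 0 ≤ w₂) (hc : 0 < c)
    (x μ₁ μ₂ : Fin p → ℝ) (π₁ π₂ : ℝ) (hπ₁ : 0 ≤ π₁) (hπ₂ : 0 ≤ π₂) (hπ : π₁ + π₂ = 1)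
    (S₁ S₂ : Matrix (Fin p) (Fin p) ℝ) (hS₁ : S₁.PosDef) (hS₂ : S₂.PosDef)
    (hdet : S₁.det ≤ S₂.det) (heig : ∀ i, hS₂.1.eigenvalues i ≤ c) :
    Real.log (π₁ * gaussDensity x μ₁ S₁ + π₂ * gaussDensity x μ₂ S₂)
      - w₁ * gaussKL μ₁ S₁ μ₂ S₂ - w₂ * gaussKL μ₂ S₂ μ₁ S₁ ≤
      (1 / 2) * ((1 + w₂) * Real.log (S₁⁻¹).det - w₂ * (S₁⁻¹ * S₂).trace)
        + ((p : ℝ) / 2) * (w₁ + w₂ + w₂ * Real.log c) :=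
  multivariate_pointwise_penalized_bound_general p w₁ w₂ c hw₁ hw₂ x μ₁ μ₂ π₁ π₂ hπ₁ hπ₂ hπ S₁ S₂
    hS₁ hS₂ hdet heig
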